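/- If C is a 2-copula that is completely dependent (i.e. Cᵀ * C = C⁺ where Cᵀ(u,v) = C(v,u) and C⁺(u,v) = min(u,v)) and stochastically increasing in the first component, then C = C⁺. -/

import Mathlib

open MeasureTheory Set Filter

def IsCopula (C : ℝ → ℝ → ℝ) : Prop :=
  (∀ u ∈ Icc (0:ℝ) 1, C u 0 = 0 ∧ C u 1 = u) ∧
  (∀ v ∈ Icc (0:ℝ) 1, C 0 v = 0 ∧ C 1 v = v) ∧
  (∀ u₁ u₂ v₁ v₂ : ℝ, u₁ ∈ Icc (0:ℝ) 1 → u₂ ∈ Icc (0:ℝ) 1 →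
    v₁ ∈ Icc (0:ℝ) 1 → v₂ ∈ Icc (0:ℝ) 1 → u₁ ≤ u₂ → v₁ ≤ v₂ →
    0 ≤ C u₂ v₂ - C u₂ v₁ - C u₁ v₂ + C u₁ v₁)

/-- Markov product of two copulas: (C₁ * C₂)(u,v) = ∫₀¹ ∂₂C₁(u,t) ∂₁C₂(t,v) dt. -/
noncomputable def MarkovProduct (C₁ C₂ : ℝ → ℝ → ℝ) (u v : ℝ) : ℝ :=
  ∫ t in (0:ℝ)..1, deriv (fun s => C₁ u s) t * deriv (fun s => C₂ s v) t

/-- Stochastically increasing in the first component: u ↦ C(u,v) is concave for each v. -/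
def StochIncr (C : ℝ → ℝ → ℝ) : Prop :=
  ∀ v ∈ Icc (0:ℝ) 1, ConcaveOn ℝ (Icc (0:ℝ) 1) (fun u => C u v)

/-- Stochastically decreasing in the first component: u ↦ C(u,v) is convex for each v. -/
def StochDecr (C : ℝ → ℝ → ℝ) : Prop :=
  ∀ v ∈ Icc (0:ℝ) 1, ConvexOn ℝ (Icc (0:ℝ) 1) (fun u => C u v)

/-! Fix `v`. By concavity, `h = ∂₁C(·, v)` is a.e. at least its right derivative `p` at `u` on
`(0, u)` and at most `p` on `(u, 1)`; and `k = ∂₂D(u, ·)` takes values in `[0, 1]` with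
`∫₀¹ k = D(u, 1) = u`. Hence `∫₀¹ k (h - p) ≤ ∫₀ᵘ (h - p)`, i.e. `(D * C)(u, v) ≤ ∫₀ᵘ h = C(u, v)`.
With `D = Cᵀ` this gives `min u v ≤ C(u, v)`; the reverse inequality is the Fréchet bound. -/

open scoped Topology

lemma ae_restrict_Icc_mem_Ioo {a b : ℝ} : ∀ᵐ t ∂volume.restrict (Icc a b), t ∈ Ioo a b := by
  rw [Measure.restrict_congr_set Ioo_ae_eq_Icc.symm]
  exact ae_restrict_mem measurableSet_Ioo

lemma IntervalIntegrable.bdd_mul_of_le {f g : ℝ → ℝ} {a b c : ℝ} (hab : a ≤ b)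
    (hg : IntervalIntegrable g volume a b) (hf : AEStronglyMeasurable f)
    (hbound : ∀ t ∈ Ioo a b, ‖f t‖ ≤ c) :
    IntervalIntegrable (fun t => f t * g t) volume a b := by
  rw [intervalIntegrable_iff_integrableOn_Ioc_of_le hab] at hg ⊢
  refine hg.bdd_mul hf.restrict (c := c) ?_
  rw [Measure.restrict_congr_set Ioo_ae_eq_Ioc.symm, ae_restrict_iff' measurableSet_Ioo]
  exact ae_of_all _ hbound

theorem integral_mul_le_integral_of_separated {k h : ℝ → ℝ} {a u b p : ℝ} (hau : a ≤ u)
    (hub : u ≤ b) (hk : ∀ᵐ t, t ∈ Ioo a b → k t ∈ Icc (0:ℝ) 1)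
    (hk_int : IntervalIntegrable k volume a b)
    (hkh_int : IntervalIntegrable (fun t => k t * h t) volume a b)
    (hh_int : IntervalIntegrable h volume a u) (hk_mass : ∫ t in a..b, k t = u - a)
    (hleft : ∀ᵐ t, t ∈ Ioo a u → p ≤ h t) (hright : ∀ᵐ t, t ∈ Ioo u b → h t ≤ p) :
    ∫ t in a..b, k t * h t ≤ ∫ t in a..u, h t := by
  have hkp_int : IntervalIntegrable (fun t => k t * (h t - p)) volume a b := by
    simpa only [mul_sub] using hkh_int.sub (hk_int.mul_const p)
  have hkp_int_of_le {c d : ℝ} (hac : a ≤ c) (hcd : c ≤ d) (hdb : d ≤ b) :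
      IntervalIntegrable (fun t => k t * (h t - p)) volume c d := by
    refine hkp_int.mono_set (uIcc_subset_uIcc ?_ ?_) <;> rw [uIcc_of_le (hau.trans hub)]
    exacts [⟨hac, hcd.trans hdb⟩, ⟨hac.trans hcd, hdb⟩]
  have h_before : ∫ t in a..u, k t * (h t - p) ≤ ∫ t in a..u, (h t - p) := by
    refine intervalIntegral.integral_mono_ae_restrict hau (hkp_int_of_le le_rfl hau hub)
      (hh_int.sub intervalIntegrable_const) ?_
    filter_upwards [ae_restrict_Icc_mem_Ioo, ae_restrict_of_ae hk, ae_restrict_of_ae hleft]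
      with t ht hkt hpt
    nlinarith [(hkt ⟨ht.1, ht.2.trans_le hub⟩).2, hpt ht]
  have h_after : ∫ t in u..b, k t * (h t - p) ≤ 0 := by
    refine (intervalIntegral.integral_mono_ae_restrict hub (hkp_int_of_le hau hub le_rfl)
      intervalIntegrable_const ?_).trans_eq intervalIntegral.integral_zero
    filter_upwards [ae_restrict_Icc_mem_Ioo, ae_restrict_of_ae hk, ae_restrict_of_ae hright]
      with t ht hkt hpt
    exact mul_nonpos_of_nonneg_of_nonpos (hkt ⟨hau.trans_lt ht.1, ht.2⟩).1 (sub_nonpos.2 (hpt ht))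
  have h_split := intervalIntegral.integral_add_adjacent_intervals
    (hkp_int_of_le le_rfl hau hub) (hkp_int_of_le hau hub le_rfl)
  have h_shift : ∫ t in a..b, k t * (h t - p) = (∫ t in a..b, k t * h t) - p * (u - a) := by
    simp only [mul_sub]
    rw [intervalIntegral.integral_sub hkh_int (hk_int.mul_const p),
      intervalIntegral.integral_mul_const, hk_mass, mul_comm]
    ring
  have h_shift' : ∫ t in a..u, (h t - p) = (∫ t in a..u, h t) - p * (u - a) := by
    rw [intervalIntegral.integral_sub hh_int intervalIntegrable_const,
      intervalIntegral.integral_const, smul_eq_mul, mul_comm]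
  linarith

namespace ConcaveOn

variable {S : Set ℝ} {f : ℝ → ℝ} {t u : ℝ}

lemma differentiableWithinAt_Ioi_of_mem_interior (hf : ConcaveOn ℝ S f) (hu : u ∈ interior S) :
    DifferentiableWithinAt ℝ f (Ioi u) u := by
  simpa using (hf.neg.differentiableWithinAt_Ioi_of_mem_interior hu).neg

lemma differentiableWithinAt_Iio_of_mem_interior (hf : ConcaveOn ℝ S f) (hu : u ∈ interior S) :
    DifferentiableWithinAt ℝ f (Iio u) u := by
  simpa using (hf.neg.differentiableWithinAt_Iio_of_mem_interior hu).neg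

lemma rightDeriv_le_leftDeriv_of_mem_interior (hf : ConcaveOn ℝ S f) (hu : u ∈ interior S) :
    derivWithin f (Ioi u) u ≤ derivWithin f (Iio u) u := by
  simpa [derivWithin.neg] using hf.neg.leftDeriv_le_rightDeriv_of_mem_interior hu

lemma deriv_le_rightDeriv (hf : ConcaveOn ℝ S f) (hu : u ∈ interior S) (ht : t ∈ S)
    (hut : u < t) (hd : DifferentiableAt ℝ f t) :
    deriv f t ≤ derivWithin f (Ioi u) u :=
  (hf.deriv_le_slope (interior_subset hu) ht hut hd).trans
    (hf.slope_le_rightDeriv (interior_subset hu) ht hut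
      (hf.differentiableWithinAt_Ioi_of_mem_interior hu))

lemma rightDeriv_le_deriv (hf : ConcaveOn ℝ S f) (hu : u ∈ interior S) (ht : t ∈ S)
    (htu : t < u) (hd : DifferentiableAt ℝ f t) :
    derivWithin f (Ioi u) u ≤ deriv f t :=
  calc derivWithin f (Ioi u) u ≤ derivWithin f (Iio u) u :=
        hf.rightDeriv_le_leftDeriv_of_mem_interior hu
    _ ≤ slope f t u := hf.leftDeriv_le_slope ht (interior_subset hu) htu
      (hf.differentiableWithinAt_Iio_of_mem_interior hu)
    _ ≤ deriv f t := hf.slope_le_deriv ht (interior_subset hu) htu hd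

end ConcaveOn

namespace IsCopula

variable {C D : ℝ → ℝ → ℝ} {u v x t : ℝ}

lemma transpose (hC : IsCopula C) : IsCopula (fun u v => C v u) :=
  ⟨hC.2.1, hC.1, fun u₁ u₂ v₁ v₂ hu₁ hu₂ hv₁ hv₂ hu hv => by
    linarith [hC.2.2 v₁ v₂ u₁ u₂ hv₁ hv₂ hu₁ hu₂ hv hu]⟩

lemma le_min (hC : IsCopula C) (hu : u ∈ Icc (0:ℝ) 1) (hv : v ∈ Icc (0:ℝ) 1) :
    C u v ≤ min u v := by
  have h0 : (0:ℝ) ∈ Icc (0:ℝ) 1 := left_mem_Icc.2 zero_le_one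
  have h1 : (1:ℝ) ∈ Icc (0:ℝ) 1 := right_mem_Icc.2 zero_le_one
  refine _root_.le_min ?_ ?_
  · linarith [hC.2.2 0 u v 1 h0 hu hv h1 hu.1 hv.2, hC.1 u hu, hC.1 0 h0, hC.2.1 v hv]
  · linarith [hC.2.2 u 1 0 v hu h1 h0 hv hu.2 hv.1, hC.2.1 v hv, hC.1 1 h1, hC.1 u hu]

lemma monotoneOn_left (hC : IsCopula C) (hv : v ∈ Icc (0:ℝ) 1) :
    MonotoneOn (fun s => C s v) (Icc 0 1) := fun a ha b hb hab => by
  linarith [hC.2.2 a b 0 v ha hb (left_mem_Icc.2 zero_le_one) hv hab hv.1, hC.1 a ha, hC.1 b hb]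

lemma lipschitzOnWith_left (hC : IsCopula C) (hv : v ∈ Icc (0:ℝ) 1) :
    LipschitzOnWith 1 (fun s => C s v) (Icc 0 1) := by
  refine LipschitzOnWith.of_le_add fun a ha b hb => ?_
  rcases le_total a b with hab | hba
  · linarith [hC.monotoneOn_left hv ha hb hab, dist_nonneg (x := a) (y := b)]
  · have h := hC.2.2 b a v 1 hb ha hv (right_mem_Icc.2 zero_le_one) hba hv.2
    rw [Real.dist_eq, abs_of_nonneg (sub_nonneg.2 hba)]
    linarith [hC.1 a ha, hC.1 b hb]

lemma absolutelyContinuousOnInterval_left (hC : IsCopula C) (hv : v ∈ Icc (0:ℝ) 1)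
    (hx : x ∈ Icc (0:ℝ) 1) : AbsolutelyContinuousOnInterval (fun s => C s v) 0 x :=
  ((hC.lipschitzOnWith_left hv).mono (by rw [uIcc_of_le hx.1]; exact Icc_subset_Icc_right hx.2)
    ).absolutelyContinuousOnInterval

lemma integral_deriv_left (hC : IsCopula C) (hv : v ∈ Icc (0:ℝ) 1) (hx : x ∈ Icc (0:ℝ) 1) :
    ∫ t in (0:ℝ)..x, deriv (fun s => C s v) t = C x v := by
  rw [(hC.absolutelyContinuousOnInterval_left hv hx).integral_deriv_eq_sub,
    (hC.2.1 v hv).1, sub_zero]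

lemma deriv_left_mem_Icc (hC : IsCopula C) (hv : v ∈ Icc (0:ℝ) 1) (ht : t ∈ Ioo (0:ℝ) 1) :
    deriv (fun s => C s v) t ∈ Icc (0:ℝ) 1 := by
  have hnhds : Icc (0:ℝ) 1 ∈ 𝓝 t := Icc_mem_nhds ht.1 ht.2
  refine ⟨?_, ?_⟩
  · rw [← derivWithin_of_mem_nhds hnhds]
    exact (hC.monotoneOn_left hv).derivWithin_nonneg
  · have h := norm_deriv_le_of_lipschitzOn hnhds (hC.lipschitzOnWith_left hv)
    rw [Real.norm_eq_abs, NNReal.coe_one] at h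
    exact (le_abs_self _).trans h

lemma exists_separating_deriv_left (hC : IsCopula C) (hSI : StochIncr C)
    (hu : u ∈ Icc (0:ℝ) 1) (hv : v ∈ Icc (0:ℝ) 1) :
    ∃ p, (∀ᵐ t, t ∈ Ioo 0 u → p ≤ deriv (fun s => C s v) t) ∧
      (∀ᵐ t, t ∈ Ioo u 1 → deriv (fun s => C s v) t ≤ p) := by
  rcases hu.1.eq_or_lt with rfl | hu0
  · exact ⟨1, ae_of_all _ fun t ht => absurd ht.2 ht.1.not_gt,
      ae_of_all _ fun t ht => (hC.deriv_left_mem_Icc hv ht).2⟩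
  rcases hu.2.eq_or_lt with rfl | hu1
  · exact ⟨0, ae_of_all _ fun t ht => (hC.deriv_left_mem_Icc hv ht).1,
      ae_of_all _ fun t ht => absurd ht.2 ht.1.not_gt⟩
  have hu' : u ∈ interior (Icc (0:ℝ) 1) := by rw [interior_Icc]; exact ⟨hu0, hu1⟩
  have hdiff := (hC.absolutelyContinuousOnInterval_left hv
    (right_mem_Icc.2 zero_le_one)).ae_differentiableAt
  refine ⟨derivWithin (fun s => C s v) (Ioi u) u, ?_, ?_⟩
  · filter_upwards [hdiff] with t hd ht
    have ht' : t ∈ Icc (0:ℝ) 1 := ⟨ht.1.le, ht.2.le.trans hu.2⟩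
    exact (hSI v hv).rightDeriv_le_deriv hu' ht' ht.2 (hd (by rwa [uIcc_of_le zero_le_one]))
  · filter_upwards [hdiff] with t hd ht
    have ht' : t ∈ Icc (0:ℝ) 1 := ⟨hu.1.trans ht.1.le, ht.2.le⟩
    exact (hSI v hv).deriv_le_rightDeriv hu' ht' ht.1 (hd (by rwa [uIcc_of_le zero_le_one]))

theorem markovProduct_le (hD : IsCopula D) (hC : IsCopula C) (hSI : StochIncr C)
    (hu : u ∈ Icc (0:ℝ) 1) (hv : v ∈ Icc (0:ℝ) 1) :
    MarkovProduct D C u v ≤ C u v := by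
  have h1 : (1:ℝ) ∈ Icc (0:ℝ) 1 := right_mem_Icc.2 zero_le_one
  have hDt := hD.transpose
  obtain ⟨p, hleft, hright⟩ := hC.exists_separating_deriv_left hSI hu hv
  have hk_int := (hDt.absolutelyContinuousOnInterval_left hu h1).intervalIntegrable_deriv
  have hkh_int : IntervalIntegrable (fun t => deriv (fun s => D u s) t *
      deriv (fun s => C s v) t) volume 0 1 :=
    (hC.absolutelyContinuousOnInterval_left hv h1).intervalIntegrable_deriv.bdd_mul_of_le
      zero_le_one (measurable_deriv _).aestronglyMeasurable (c := 1) fun t ht => by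
        obtain ⟨hk0, hk1⟩ := hDt.deriv_left_mem_Icc hu ht
        rwa [Real.norm_eq_abs, abs_of_nonneg hk0]
  have hk_mass : ∫ t in (0:ℝ)..1, deriv (fun s => D u s) t = u - 0 := by
    rw [hDt.integral_deriv_left hu h1, (hD.1 u hu).2, sub_zero]
  calc MarkovProduct D C u v ≤ ∫ t in (0:ℝ)..u, deriv (fun s => C s v) t :=
        integral_mul_le_integral_of_separated hu.1 hu.2
          (ae_of_all _ fun t => hDt.deriv_left_mem_Icc hu) hk_int hkh_int
          (hC.absolutelyContinuousOnInterval_left hv hu).intervalIntegrable_deriv hk_mass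
          hleft hright
    _ = C u v := hC.integral_deriv_left hv hu

end IsCopula

theorem completelyDependent_stochIncr_eq_upperFrechet (C : ℝ → ℝ → ℝ) (hC : IsCopula C)
    (hcd : ∀ u ∈ Icc (0:ℝ) 1, ∀ v ∈ Icc (0:ℝ) 1,
      MarkovProduct (fun x y => C y x) C u v = min u v)
    (hSI : StochIncr C) :
    ∀ u ∈ Icc (0:ℝ) 1, ∀ v ∈ Icc (0:ℝ) 1, C u v = min u v := fun u hu v hv =>
  (hC.le_min hu hv).antisymm (hcd u hu v hv ▸ hC.transpose.markovProduct_le hC hSI hu hv)
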